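/- arXiv:2202.03062 — 5 statements merged into one kernel-verified Lean document; each statement's English description precedes it below -/
import Mathlib

section
/- Let G be a finite abelian group of order n and let R, L, S be subsets of G with R = R⁻¹, L = L⁻¹ and 1 ∉ R ∪ L. Then the multiset of eigenvalues of the adjacency matrix of the semi-Cayley graph SC(G,R,L,S) is exactly {λᵢ⁺, λᵢ⁻ : i = 1, …, n}, where λᵢ⁺ = (χᵢ(R) + χᵢ(L) + √((χᵢ(R) − χᵢ(L))² + 4|χᵢ(S)|²))/2 and λᵢ⁻ = (χᵢ(R) + χᵢ(L) − √((χᵢ(R) − χᵢ(L))² + 4|χᵢ(S)|²))/2. -/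
open scoped Classical Pointwise
open Complex Finset Matrix

noncomputable section

/-- Adjacency matrix of the semi-Cayley graph `SC(G,R,L,S)` on vertex set `G × Fin 2`. -/
def scAdj {G : Type*} [Group G] (R L S : Finset G) :
    Matrix (G × Fin 2) (G × Fin 2) ℂ := fun u v =>
  if u.2 = 0 ∧ v.2 = 0 ∧ v.1 * u.1⁻¹ ∈ R then 1
  else if u.2 = 1 ∧ v.2 = 1 ∧ v.1 * u.1⁻¹ ∈ L then 1
  else if u.2 = 0 ∧ v.2 = 1 ∧ v.1 * u.1⁻¹ ∈ S then 1
  else if u.2 = 1 ∧ v.2 = 0 ∧ u.1 * v.1⁻¹ ∈ S then 1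
  else 0

/-- Adjacency matrix of the Cayley graph `Cay(G,T)`. -/
def cayAdj {G : Type*} [Group G] (T : Finset G) : Matrix G G ℂ := fun u v =>
  if v * u⁻¹ ∈ T then 1 else 0

/-- Transfer matrix `H(t) = exp(-i t A)`. -/
def transfer {V : Type*} [Fintype V] [DecidableEq V]
    (A : Matrix V V ℂ) (t : ℝ) : Matrix V V ℂ :=
  NormedSpace.exp ((-(Complex.I * (t : ℂ))) • A)

/-- Perfect state transfer from `u` to `v` at time `t`. -/
def pst {V : Type*} [Fintype V] [DecidableEq V]
    (A : Matrix V V ℂ) (u v : V) (t : ℝ) : Prop :=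
  ‖transfer A t u v‖ = 1

/-- A matrix is integral if all its eigenvalues are integers. -/
def isIntegral {V : Type*} [Fintype V] [DecidableEq V] (A : Matrix V V ℂ) : Prop :=
  ∀ μ ∈ spectrum ℂ A, ∃ k : ℤ, μ = (k : ℂ)

/-- The character sum `χ(X) = ∑_{x ∈ X} χ(x)`. -/
def charSum {G : Type*} [Group G] (χ : G →* ℂ) (X : Finset G) : ℂ := ∑ x ∈ X, χ x

/-- The eigenvalue `λ_χ⁺` of `SC(G,R,L,S)`, with the convention `λ_χ⁺ = χ(R)` when `χ(S) = 0`. -/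
def lamP {G : Type*} [Group G] (R L S : Finset G) (χ : G →* ℂ) : ℝ :=
  if charSum χ S = 0 then (charSum χ R).re
  else ((charSum χ R).re + (charSum χ L).re +
    Real.sqrt (((charSum χ R).re - (charSum χ L).re) ^ 2 +
      4 * ‖charSum χ S‖ ^ 2)) / 2

/-- The eigenvalue `λ_χ⁻` of `SC(G,R,L,S)`, with the convention `λ_χ⁻ = χ(L)` when `χ(S) = 0`. -/
def lamM {G : Type*} [Group G] (R L S : Finset G) (χ : G →* ℂ) : ℝ :=
  if charSum χ S = 0 then (charSum χ L).re
  else ((charSum χ R).re + (charSum χ L).re -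
    Real.sqrt (((charSum χ R).re - (charSum χ L).re) ^ 2 +
      4 * ‖charSum χ S‖ ^ 2)) / 2

/-- The 2-adic valuation `ν₂` with `ν₂(0) = ∞`, extended (junk value `0`) to the reals. -/
def nu2 (x : ℝ) : WithTop ℤ :=
  if x = 0 then ⊤
  else if hq : ∃ q : ℚ, (q : ℝ) = x then ((padicValRat 2 hq.choose : ℤ) : WithTop ℤ)
  else 0


/-!
With the vertices ordered as `G × {0, 1}`, the adjacency matrix of `SC(G,R,L,S)` is the
2 × 2 block matrix of Cayley matrices `Cay(G,R)`, `Cay(G,S)`, `Cay(G,S⁻¹)`, `Cay(G,L)`.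
Every character `χ` is a common eigenvector of all Cayley matrices, `Cay(G,T) χ = χ(T) χ`, and
the characters form a basis of `ℂ^G` (Dedekind independence, and `|Ĝ| = |G|` for abelian `G`).
In this basis the adjacency matrix becomes block diagonal with the 2 × 2 blocks
`[[χ(R), χ(S)], [χ(S⁻¹), χ(L)]]`. Since `χ(R)`, `χ(L)` are real and `χ(S⁻¹) = conj χ(S)`, the
quadratic formula gives the eigenvalues of each block.
-/

open Polynomial ComplexConjugate
open scoped Kronecker

section Characters

variable {G : Type*} [Group G]

lemma charSum_inv [Finite G] [DecidableEq G] (χ : G →* ℂ) (T : Finset G) :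
    charSum χ T⁻¹ = conj (charSum χ T) := by
  simp only [charSum, sum_inv_index, map_inv, map_sum]
  exact sum_congr rfl fun g _ =>
    Complex.inv_eq_conj (χ.isOfFinOrder (isOfFinOrder_of_finite g)).norm_eq_one

lemma charSum_eq_re_of_inv_eq [Finite G] [DecidableEq G] {T : Finset G} (hT : T⁻¹ = T)
    (χ : G →* ℂ) : charSum χ T = (charSum χ T).re :=
  (Complex.conj_eq_iff_re.mp (by rw [← charSum_inv, hT])).symm

lemma cayAdj_mulVec_monoidHom [Fintype G] (T : Finset G) (χ : G →* ℂ) :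
    cayAdj T *ᵥ ⇑χ = charSum χ T • ⇑χ := by
  ext g
  rw [mulVec, dotProduct, ← Equiv.sum_comp (Equiv.mulRight g)]
  simp [cayAdj, charSum, sum_mul]

lemma isUnit_of_monoidHom_cols [Fintype G] [DecidableEq G] (χ : G → G →* ℂ)
    (hχ : Function.Injective χ) : IsUnit (of fun g h => χ h g) :=
  linearIndependent_cols_iff_isUnit.mp ((linearIndependent_monoidHom G ℂ).comp χ hχ)

def monoidHomUnitsEquiv (M : Type*) [Monoid M] : (G →* Mˣ) ≃ (G →* M) where
  toFun ψ := (Units.coeHom M).comp ψ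
  invFun χ := χ.toHomUnits
  left_inv ψ := by ext; rfl
  right_inv χ := by ext; rfl

end Characters

lemma nonempty_equiv_monoidHom_complex (G : Type*) [CommGroup G] [Finite G] :
    Nonempty (G ≃ (G →* ℂ)) := by
  have : NeZero (Monoid.exponent G : ℂ) :=
    ⟨Nat.cast_ne_zero.mpr Monoid.exponent_ne_zero_of_finite⟩
  exact ⟨(CommGroup.monoidHom_mulEquiv_of_hasEnoughRootsOfUnity G ℂ).some.toEquiv.symm.trans
    (monoidHomUnitsEquiv ℂ)⟩

section MatrixCharpoly

variable {n o R : Type*} [Fintype n] [DecidableEq n] [Fintype o] [DecidableEq o] [CommRing R]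

lemma charpoly_eq_of_mul_eq_mul {A D P : Matrix n n R} (hP : IsUnit P) (h : A * P = P * D) :
    A.charpoly = D.charpoly := by
  obtain ⟨P, rfl⟩ := hP
  rw [← charpoly_units_conj' P A, Matrix.mul_assoc, h, ← Matrix.mul_assoc, ← coe_units_inv,
    Units.inv_mul, Matrix.one_mul]

lemma charmatrix_blockDiagonal (M : o → Matrix n n R) :
    charmatrix (blockDiagonal M) = blockDiagonal fun k => charmatrix (M k) := by
  ext ⟨i, k⟩ ⟨j, k'⟩
  by_cases hk : k = k' <;> simp [charmatrix_apply, blockDiagonal_apply, diagonal_apply, hk]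

lemma charpoly_blockDiagonal (M : o → Matrix n n R) :
    (blockDiagonal M).charpoly = ∏ k, (M k).charpoly := by
  rw [charpoly, charmatrix_blockDiagonal, det_blockDiagonal]
  rfl

lemma X_sq_sub_C_mul_X_add_C_eq_mul (p q : R) :
    X ^ 2 - C (p + q) * X + C (p * q) = (X - C p) * (X - C q) := by
  simp only [map_add, map_mul]
  ring

end MatrixCharpoly

lemma charpoly_fin_two_eq_mul {M : Matrix (Fin 2) (Fin 2) ℂ} {a b c : ℝ} (ha : M 0 0 = a)
    (hb : M 1 1 = b) (hc : M 0 1 * M 1 0 = c ^ 2) :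
    M.charpoly =
      (X - C (((a + b + √((a - b) ^ 2 + 4 * c ^ 2)) / 2 : ℝ) : ℂ)) *
        (X - C (((a + b - √((a - b) ^ 2 + 4 * c ^ 2)) / 2 : ℝ) : ℂ)) := by
  have hs := Real.sq_sqrt (by positivity : 0 ≤ (a - b) ^ 2 + 4 * c ^ 2)
  apply_fun ((↑) : ℝ → ℂ) at hs
  push_cast at hs ⊢
  rw [charpoly_fin_two, trace_fin_two, det_fin_two, ha, hb, hc, ← X_sq_sub_C_mul_X_add_C_eq_mul]
  congr 4
  · ring
  · linear_combination (1 / 4 : ℂ) * hs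

def blockCayAdj {G ι : Type*} [Group G] (T : ι → ι → Finset G) : Matrix (G × ι) (G × ι) ℂ :=
  of fun u v => cayAdj (T u.2 v.2) u.1 v.1

lemma blockCayAdj_mul_kronecker {G ι κ : Type*} [Group G] [Fintype G] [Fintype ι] [DecidableEq ι]
    [Fintype κ] [DecidableEq κ] (T : ι → ι → Finset G) (χ : κ → G →* ℂ) :
    blockCayAdj T * (of (fun g h => χ h g) ⊗ₖ (1 : Matrix ι ι ℂ)) =
      (of (fun g h => χ h g) ⊗ₖ (1 : Matrix ι ι ℂ)) *
        reindex (Equiv.prodComm ι κ) (Equiv.prodComm ι κ)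
          (blockDiagonal fun h => of fun i j => charSum (χ h) (T i j)) := by
  ext ⟨g, i⟩ ⟨h, j⟩
  have hχ := congrFun (cayAdj_mulVec_monoidHom (T i j) (χ h)) g
  simp only [mulVec, dotProduct, Pi.smul_apply, smul_eq_mul] at hχ
  simp [Matrix.mul_apply, Fintype.sum_prod_type, blockCayAdj, one_apply, blockDiagonal_apply, hχ,
    mul_comm]

theorem charpoly_blockCayAdj {G ι : Type*} [CommGroup G] [Fintype G] [DecidableEq G]
    [Fintype (G →* ℂ)] [Fintype ι] [DecidableEq ι] (T : ι → ι → Finset G) :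
    (blockCayAdj T).charpoly = ∏ χ : G →* ℂ, (of fun i j => charSum χ (T i j)).charpoly := by
  obtain ⟨e⟩ := nonempty_equiv_monoidHom_complex G
  have hP : IsUnit (of (fun g h => e h g) ⊗ₖ (1 : Matrix ι ι ℂ)) := by
    rw [isUnit_iff_isUnit_det, det_kronecker, det_one, one_pow, mul_one]
    exact ((isUnit_of_monoidHom_cols e e.injective).map detMonoidHom).pow _
  rw [charpoly_eq_of_mul_eq_mul hP (blockCayAdj_mul_kronecker T e), charpoly_reindex,
    charpoly_blockDiagonal]
  exact e.prod_comp fun χ => (of fun i j => charSum χ (T i j)).charpoly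

def semiCayleyBlocks {G : Type*} [Group G] (R L S : Finset G) : Fin 2 → Fin 2 → Finset G :=
  ![![R, S], ![S⁻¹, L]]

lemma scAdj_eq_blockCayAdj {G : Type*} [Group G] (R L S : Finset G) :
    scAdj R L S = blockCayAdj (semiCayleyBlocks R L S) := by
  ext ⟨g, i⟩ ⟨h, j⟩
  fin_cases i <;> fin_cases j <;> simp [scAdj, blockCayAdj, cayAdj, semiCayleyBlocks]
  -- the two sides differ only in their `Decidable` instances
  rfl

theorem semiCayley_eigenvalues_general
    {G : Type*} [CommGroup G] [Fintype G] [DecidableEq G] [Fintype (G →* ℂ)]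
    (R L S : Finset G) (hR : R⁻¹ = R) (hL : L⁻¹ = L) :
    (scAdj R L S).charpoly =
      ∏ χ : G →* ℂ,
        ((Polynomial.X - Polynomial.C (((((charSum χ R).re + (charSum χ L).re +
              Real.sqrt (((charSum χ R).re - (charSum χ L).re) ^ 2 +
                4 * ‖charSum χ S‖ ^ 2)) / 2 : ℝ) : ℂ))) *
         (Polynomial.X - Polynomial.C (((((charSum χ R).re + (charSum χ L).re -
              Real.sqrt (((charSum χ R).re - (charSum χ L).re) ^ 2 +
                4 * ‖charSum χ S‖ ^ 2)) / 2 : ℝ) : ℂ)))) := by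
  rw [scAdj_eq_blockCayAdj, charpoly_blockCayAdj]
  refine prod_congr rfl fun χ _ => charpoly_fin_two_eq_mul ?_ ?_ ?_
  · exact charSum_eq_re_of_inv_eq hR χ
  · exact charSum_eq_re_of_inv_eq hL χ
  · simp [semiCayleyBlocks, charSum_inv, Complex.mul_conj, Complex.normSq_eq_norm_sq]

/-- The multiset of eigenvalues of the semi-Cayley graph `SC(G,R,L,S)` over a
finite abelian group `G` is `{λ_χ⁺, λ_χ⁻ : χ ∈ Irr(G)}`, expressed via the characteristic
polynomial. -/
theorem semiCayley_eigenvalues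
    {G : Type*} [CommGroup G] [Fintype G] [DecidableEq G] [Fintype (G →* ℂ)]
    (R L S : Finset G) (hR : R⁻¹ = R) (hL : L⁻¹ = L)
    (h1R : (1 : G) ∉ R) (h1L : (1 : G) ∉ L) :
    (scAdj R L S).charpoly =
      ∏ χ : G →* ℂ,
        ((Polynomial.X - Polynomial.C (((((charSum χ R).re + (charSum χ L).re +
              Real.sqrt (((charSum χ R).re - (charSum χ L).re) ^ 2 +
                4 * ‖charSum χ S‖ ^ 2)) / 2 : ℝ) : ℂ))) *
         (Polynomial.X - Polynomial.C (((((charSum χ R).re + (charSum χ L).re -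
              Real.sqrt (((charSum χ R).re - (charSum χ L).re) ^ 2 +
                4 * ‖charSum χ S‖ ^ 2)) / 2 : ℝ) : ℂ)))) :=
  semiCayley_eigenvalues_general R L S hR hL

end
end

section
/- Let G be a finite abelian group, R ⊆ G with R = R⁻¹ and 1 ∉ R, and S ⊆ G. Let C be the n × n complex 0/1 matrix indexed by G with C_{x,y} = 1 if and only if yx⁻¹ ∈ S, and suppose CCᵀ = I. If the Cayley graph Cay(G,R) has perfect state transfer from g to h at a time t that is an integer multiple of π, then the semi-Cayley graph SC(G,R,R,S) has perfect state transfer from (g,0) to (h,0) and from (g,1) to (h,1) at time t. -/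
open scoped Classical Pointwise
open Complex Finset Matrix

noncomputable section

/-
The adjacency matrix of `SC(G,R,R,S)` is `diag(A, A) + Q`, where `A` is the adjacency matrix of
`Cay(G,R)` and `Q = [[0, C], [Cᵀ, 0]]`. As `G` is abelian, Cayley adjacency matrices commute, so
`A` commutes with `C` and `Cᵀ = Cay(G, S⁻¹)`, hence with `Q`, and `H(t)` factors as
`diag(H_A(t), H_A(t)) · exp(-itQ)`. Since `Q² = I`, `exp(-itQ) = cos t · I - i sin t · Q`, which
is the scalar `±1` when `t ∈ πℤ`.
-/

namespace NormedSpace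

theorem exp_smul_of_mul_self_eq_one {𝔸 : Type*} [NormedRing 𝔸] [NormedAlgebra ℂ 𝔸]
    [CompleteSpace 𝔸] {u : 𝔸} (hu : u * u = 1) (z : ℂ) :
    exp (z • u) = Complex.cosh z • (1 : 𝔸) + Complex.sinh z • u := by
  have hpow : ∀ n, u ^ (2 * n) = 1 := fun n => by rw [pow_mul, sq, hu, one_pow]
  refine (exp_series_hasSum_exp' (𝕂 := ℂ) (z • u)).unique (HasSum.even_add_odd ?_ ?_)
  · convert (Complex.hasSum_cosh z).smul_const (1 : 𝔸) using 2 with n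
    rw [smul_pow, hpow, smul_smul, div_eq_inv_mul]
  · convert (Complex.hasSum_sinh z).smul_const u using 2 with n
    rw [smul_pow, pow_succ u, hpow, one_mul, smul_smul, div_eq_inv_mul]

end NormedSpace

theorem transfer_of_mul_self_eq_one {V : Type*} [Fintype V] [DecidableEq V]
    {Q : Matrix V V ℂ} (hQ : Q * Q = 1) (t : ℝ) :
    transfer Q t = (Real.cos t : ℂ) • 1 - (I * Real.sin t) • Q := by
  have hexp : transfer Q t = _ :=
    open scoped Norms.Operator in
    NormedSpace.exp_smul_of_mul_self_eq_one (𝔸 := Matrix V V ℂ) hQ _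
  rw [hexp, Complex.cosh_neg, Complex.sinh_neg, mul_comm I, Complex.cosh_mul_I,
    Complex.sinh_mul_I, Complex.ofReal_cos, Complex.ofReal_sin, neg_smul, sub_eq_add_neg,
    mul_comm (Complex.sin _)]

theorem transfer_add_of_commute {V : Type*} [Fintype V] [DecidableEq V]
    {A B : Matrix V V ℂ} (h : Commute A B) (t : ℝ) :
    transfer (A + B) t = transfer A t * transfer B t := by
  rw [transfer, smul_add, Matrix.exp_add_of_commute _ _ ((h.smul_left _).smul_right _)]
  rfl

theorem transfer_blockDiagonal {m n : Type*} [Fintype m] [DecidableEq m] [Fintype n]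
    [DecidableEq n] (v : m → Matrix n n ℂ) (t : ℝ) :
    transfer (blockDiagonal v) t = blockDiagonal fun i => transfer (v i) t := by
  rw [transfer, ← blockDiagonal_smul, Matrix.exp_blockDiagonal]
  exact open scoped Norms.Operator in congrArg _ (Pi.exp_def _)

/-- The block matrix `[[0, C], [Cᵀ, 0]]`, the `Fin 2` coordinate indexing the blocks. -/
def offDiagBlocks {n α : Type*} [Zero α] (C : Matrix n n α) :
    Matrix (n × Fin 2) (n × Fin 2) α :=
  of fun u v => if u.2 = 0 ∧ v.2 = 1 then C u.1 v.1
    else if u.2 = 1 ∧ v.2 = 0 then C v.1 u.1 else 0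

theorem offDiagBlocks_mul_self {n α : Type*} [Fintype n] [DecidableEq n] [CommRing α]
    {C : Matrix n n α} (hC : C * Cᵀ = 1) : offDiagBlocks C * offDiagBlocks C = 1 := by
  have hCl : ∀ x y, (C * Cᵀ) x y = (1 : Matrix n n α) x y := by rw [hC]; simp
  have hCr : ∀ x y, (Cᵀ * C) x y = (1 : Matrix n n α) x y := by
    rw [mul_eq_one_comm.mp hC]; simp
  simp only [mul_apply, transpose_apply, one_apply] at hCl hCr
  ext ⟨x, i⟩ ⟨y, j⟩
  fin_cases i <;> fin_cases j <;>
    simp [offDiagBlocks, mul_apply, Fintype.sum_prod_type, one_apply, hCl, hCr]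

theorem commute_blockDiagonal_offDiagBlocks {n α : Type*} [Fintype n] [DecidableEq n]
    [Semiring α] {A C : Matrix n n α} (hAC : Commute A C) (hACt : Commute A Cᵀ) :
    Commute (blockDiagonal fun _ : Fin 2 => A) (offDiagBlocks C) := by
  have h₁ : ∀ x y, (A * C) x y = (C * A) x y := by rw [hAC.eq]; simp
  have h₂ : ∀ x y, (A * Cᵀ) x y = (Cᵀ * A) x y := by rw [hACt.eq]; simp
  simp only [mul_apply, transpose_apply] at h₁ h₂
  ext ⟨x, i⟩ ⟨y, j⟩
  fin_cases i <;> fin_cases j <;>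
    simp [offDiagBlocks, mul_apply, Fintype.sum_prod_type, blockDiagonal_apply, h₁, h₂]

theorem cayAdj_transpose {G : Type*} [Group G] [DecidableEq G] (T : Finset G) :
    (cayAdj T)ᵀ = cayAdj T⁻¹ := by
  ext u v
  simp [cayAdj, Finset.mem_inv', _root_.mul_inv_rev]

theorem commute_cayAdj {G : Type*} [CommGroup G] [Fintype G] (T U : Finset G) :
    Commute (cayAdj T) (cayAdj U) := by
  ext u v
  simp only [Matrix.mul_apply]
  apply Fintype.sum_equiv ((Equiv.inv G).trans (Equiv.mulLeft (u * v)))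
  intro w
  simp only [Equiv.trans_apply, Equiv.inv_apply, Equiv.coe_mulLeft, cayAdj]
  have h1 : u * v * w⁻¹ * u⁻¹ = v * w⁻¹ := by
    rw [mul_comm u v, mul_right_comm v u w⁻¹, mul_inv_cancel_right]
  have h2 : v * (u * v * w⁻¹)⁻¹ = w * u⁻¹ := by
    rw [_root_.mul_inv_rev, _root_.mul_inv_rev, inv_inv, mul_left_comm v w,
      mul_inv_cancel_left]
  simp only [h1, h2]
  exact mul_comm _ _

theorem scAdj_eq_blockDiagonal_add {G : Type*} [Group G] (R L S : Finset G) :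
    scAdj R L S = blockDiagonal ![cayAdj R, cayAdj L] + offDiagBlocks (cayAdj S) := by
  ext ⟨x, i⟩ ⟨y, j⟩
  fin_cases i <;> fin_cases j <;>
    simp [scAdj, cayAdj, offDiagBlocks, blockDiagonal_apply]

theorem semiCayley_pst_of_cayley_pst_general
    {G : Type*} [CommGroup G] [Fintype G] [DecidableEq G]
    (R S : Finset G)
    (hC : cayAdj S * (cayAdj S)ᵀ = 1)
    (g h : G) (t : ℝ) (k : ℤ) (hk : t = (k : ℝ) * Real.pi)
    (hpst : pst (cayAdj R) g h t) :
    pst (scAdj R R S) (g, 0) (h, 0) t ∧ pst (scAdj R R S) (g, 1) (h, 1) t := by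
  have hblock : ![cayAdj R, cayAdj R] = fun _ => cayAdj R := by
    funext i; fin_cases i <;> rfl
  have hcomm : Commute (blockDiagonal fun _ : Fin 2 => cayAdj R) (offDiagBlocks (cayAdj S)) :=
    commute_blockDiagonal_offDiagBlocks (commute_cayAdj R S)
      (cayAdj_transpose S ▸ commute_cayAdj R S⁻¹)
  have hsin : Real.sin t = 0 := hk ▸ Real.sin_int_mul_pi k
  have hcos : ‖(Real.cos t : ℂ)‖ = 1 := by
    rw [Complex.norm_real, Real.norm_eq_abs, Real.abs_cos_eq_one_iff]
    exact ⟨k, hk.symm⟩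
  have htransfer : transfer (scAdj R R S) t
      = (Real.cos t : ℂ) • blockDiagonal fun _ => transfer (cayAdj R) t := by
    rw [scAdj_eq_blockDiagonal_add, hblock, transfer_add_of_commute hcomm, transfer_blockDiagonal,
      transfer_of_mul_self_eq_one (offDiagBlocks_mul_self hC), hsin]
    simp
  constructor <;>
    rw [pst, htransfer, Matrix.smul_apply, blockDiagonal_apply_eq, smul_eq_mul, norm_mul, hcos,
      one_mul] <;>
    exact hpst

/-- If `C Cᵀ = I` and `Cay(G,R)` has PST from `g` to `h` at a time `t ∈ πℤ`,
then `SC(G,R,R,S)` has PST from `(g,0)` to `(h,0)` and from `(g,1)` to `(h,1)` at time `t`. -/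
theorem semiCayley_pst_of_cayley_pst
    {G : Type*} [CommGroup G] [Fintype G] [DecidableEq G]
    (R S : Finset G) (hR : R⁻¹ = R) (h1R : (1 : G) ∉ R)
    (hC : cayAdj S * (cayAdj S)ᵀ = 1)
    (g h : G) (t : ℝ) (ht : 0 < t) (k : ℤ) (hk : t = (k : ℝ) * Real.pi)
    (hpst : pst (cayAdj R) g h t) :
    pst (scAdj R R S) (g, 0) (h, 0) t ∧ pst (scAdj R R S) (g, 1) (h, 1) t :=
  semiCayley_pst_of_cayley_pst_general R S hC g h t k hk hpst

end
end

section
/- Let G be a finite abelian group and R ⊆ G with R = R⁻¹ and 1 ∉ R. If the Cayley graph Cay(G,R) has perfect state transfer from g to h at a time t that is an odd integer multiple of π/2, then the semi-Cayley graph SC(G,R,R,{1}) has perfect state transfer from (g,0) to (h,1) at time t. -/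
open scoped Classical Pointwise
open Complex Finset Matrix

noncomputable section

/-!
With the vertices ordered as `G × Fin 2`, the adjacency matrix of `SC(G,R,R,{1})` is the Kronecker
sum `A ⊗ 1 + 1 ⊗ J` of the adjacency matrices `A` of `Cay(G,R)` and `J` of `K₂`: the graph is the
Cartesian product `Cay(G,R) □ K₂`. The two summands commute, so the transfer matrix factors as
`H_A(t) ⊗ H_J(t)`, and PST in both factors gives PST in the product. Conjugating `J` to
`diag(1,-1)` by the Hadamard matrix gives `H_J(t)₀₁ = -i sin t`, of modulus `1` exactly at the odd
multiples of `π/2`.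
-/

open scoped Kronecker

namespace Matrix

theorem kronecker_one_eq_blockDiagonal {m n α : Type*} [DecidableEq n] [MulZeroOneClass α]
    (A : Matrix m m α) : A ⊗ₖ (1 : Matrix n n α) = blockDiagonal fun _ => A := by
  ext ⟨i, k⟩ ⟨j, l⟩
  simp [blockDiagonal_apply, one_apply]

theorem one_kronecker_eq_reindex_blockDiagonal {m n α : Type*} [DecidableEq m]
    [MulZeroOneClass α] (B : Matrix n n α) :
    (1 : Matrix m m α) ⊗ₖ B =
      reindex (Equiv.prodComm _ _) (Equiv.prodComm _ _) (blockDiagonal fun _ : m => B) := by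
  ext ⟨i, k⟩ ⟨j, l⟩
  simp [blockDiagonal_apply, one_apply]

variable {m n 𝕜 : Type*} [Fintype m] [DecidableEq m] [Fintype n] [DecidableEq n] [RCLike 𝕜]

open scoped Norms.Operator in
theorem exp_reindex (e : m ≃ n) (A : Matrix m m 𝕜) :
    NormedSpace.exp (reindex e e A) = reindex e e (NormedSpace.exp A) :=
  (NormedSpace.map_exp (reindexAlgEquiv ℚ 𝕜 e) (continuous_id.matrix_reindex e e) A).symm

open scoped Norms.Operator in
theorem exp_blockDiagonal_const (A : Matrix m m 𝕜) :
    NormedSpace.exp (blockDiagonal fun _ : n => A) =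
      blockDiagonal fun _ => NormedSpace.exp A :=
  (NormedSpace.map_exp ((blockDiagonalRingHom m n 𝕜).comp (Pi.constRingHom n _))
    (continuous_pi fun _ => continuous_id).matrix_blockDiagonal A).symm

theorem exp_kronecker_one (A : Matrix m m 𝕜) :
    NormedSpace.exp (A ⊗ₖ (1 : Matrix n n 𝕜)) = NormedSpace.exp A ⊗ₖ 1 := by
  rw [kronecker_one_eq_blockDiagonal, exp_blockDiagonal_const, kronecker_one_eq_blockDiagonal]

theorem exp_one_kronecker (B : Matrix n n 𝕜) :
    NormedSpace.exp ((1 : Matrix m m 𝕜) ⊗ₖ B) = 1 ⊗ₖ NormedSpace.exp B := by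
  rw [one_kronecker_eq_reindex_blockDiagonal, exp_reindex, exp_blockDiagonal_const,
    one_kronecker_eq_reindex_blockDiagonal]

theorem exp_kronecker_one_add_one_kronecker (A : Matrix m m 𝕜) (B : Matrix n n 𝕜) :
    NormedSpace.exp (A ⊗ₖ (1 : Matrix n n 𝕜) + (1 : Matrix m m 𝕜) ⊗ₖ B) =
      NormedSpace.exp A ⊗ₖ NormedSpace.exp B := by
  have hcomm : Commute (A ⊗ₖ (1 : Matrix n n 𝕜)) ((1 : Matrix m m 𝕜) ⊗ₖ B) := by
    simp only [Commute, SemiconjBy, ← mul_kronecker_mul, one_mul, mul_one]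
  rw [exp_add_of_commute _ _ hcomm, exp_kronecker_one, exp_one_kronecker, ← mul_kronecker_mul,
    mul_one, one_mul]

end Matrix

section CartesianProduct

variable {V W : Type*} [Fintype V] [DecidableEq V] [Fintype W] [DecidableEq W]

theorem transfer_kronecker_one_add_one_kronecker (A : Matrix V V ℂ) (B : Matrix W W ℂ)
    (t : ℝ) :
    transfer (A ⊗ₖ (1 : Matrix W W ℂ) + (1 : Matrix V V ℂ) ⊗ₖ B) t =
      transfer A t ⊗ₖ transfer B t := by
  rw [transfer, smul_add, ← smul_kronecker, ← kronecker_smul,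
    exp_kronecker_one_add_one_kronecker]
  rfl

theorem pst_kronecker_one_add_one_kronecker {A : Matrix V V ℂ} {B : Matrix W W ℂ}
    {u v : V} {a b : W} {t : ℝ} (hA : pst A u v t) (hB : pst B a b t) :
    pst (A ⊗ₖ (1 : Matrix W W ℂ) + (1 : Matrix V V ℂ) ⊗ₖ B) (u, a) (v, b) t := by
  rw [pst, transfer_kronecker_one_add_one_kronecker, kronecker_apply, norm_mul, hA, hB, one_mul]

end CartesianProduct

def hadamardTwo : Matrix (Fin 2) (Fin 2) ℂ := !![1, 1; 1, -1]

theorem hadamardTwo_mul_smul_hadamardTwo : hadamardTwo * ((2 : ℂ)⁻¹ • hadamardTwo) = 1 := by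
  ext i j
  fin_cases i <;> fin_cases j <;> norm_num [hadamardTwo, mul_apply, Fin.sum_univ_two]

theorem hadamardTwo_mul_diagonal_mul_inv (a b : ℂ) :
    hadamardTwo * diagonal ![a, b] * hadamardTwo⁻¹ =
      !![(a + b) / 2, (a - b) / 2; (a - b) / 2, (a + b) / 2] := by
  rw [inv_eq_right_inv hadamardTwo_mul_smul_hadamardTwo]
  ext i j
  fin_cases i <;> fin_cases j <;>
    simp [hadamardTwo, mul_apply, Fin.sum_univ_two, vecMul_diagonal] <;> ring

theorem exp_smul_adjMatrix_top_fin_two (z : ℂ) :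
    NormedSpace.exp (z • (⊤ : SimpleGraph (Fin 2)).adjMatrix ℂ) =
      !![Complex.cosh z, Complex.sinh z; Complex.sinh z, Complex.cosh z] := by
  have hdiag : z • (⊤ : SimpleGraph (Fin 2)).adjMatrix ℂ =
      hadamardTwo * diagonal ![z, -z] * hadamardTwo⁻¹ := by
    rw [hadamardTwo_mul_diagonal_mul_inv]
    ext i j
    fin_cases i <;> fin_cases j <;> simp
  have hexp : NormedSpace.exp ![z, -z] = ![Complex.exp z, Complex.exp (-z)] := by
    ext i
    fin_cases i <;> simp [Complex.exp_eq_exp_ℂ]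
  rw [hdiag, exp_conj _ _ (.of_mul_eq_one _ hadamardTwo_mul_smul_hadamardTwo), exp_diagonal,
    hexp, hadamardTwo_mul_diagonal_mul_inv, Complex.cosh, Complex.sinh]

theorem transfer_adjMatrix_top_fin_two_zero_one (t : ℝ) :
    transfer ((⊤ : SimpleGraph (Fin 2)).adjMatrix ℂ) t 0 1 = -(Real.sin t * I) := by
  rw [transfer, exp_smul_adjMatrix_top_fin_two]
  simp [mul_comm I, Complex.sinh_neg, Complex.sinh_mul_I, Complex.ofReal_sin]

theorem pst_adjMatrix_top_fin_two_odd_mul_pi_div_two (k : ℤ) :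
    pst ((⊤ : SimpleGraph (Fin 2)).adjMatrix ℂ) 0 1 ((2 * k + 1) * (Real.pi / 2)) := by
  rw [pst, transfer_adjMatrix_top_fin_two_zero_one, norm_neg, norm_mul, Complex.norm_I,
    mul_one, Complex.norm_real, Real.norm_eq_abs,
    show (2 * k + 1) * (Real.pi / 2) = k * Real.pi + Real.pi / 2 by ring,
    Real.sin_add_pi_div_two, Real.abs_cos_int_mul_pi]

theorem scAdj_self_singleton_one {G : Type*} [Group G] [DecidableEq G] (R : Finset G) :
    scAdj R R {1} =
      cayAdj R ⊗ₖ (1 : Matrix (Fin 2) (Fin 2) ℂ) +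
        (1 : Matrix G G ℂ) ⊗ₖ (⊤ : SimpleGraph (Fin 2)).adjMatrix ℂ := by
  ext ⟨x, a⟩ ⟨y, b⟩
  fin_cases a <;> fin_cases b <;>
    simp [scAdj, cayAdj, one_apply, mul_inv_eq_one, eq_comm]

theorem semiCayley_spoke_pst_of_cayley_pst_general
    {G : Type*} [CommGroup G] [Fintype G] [DecidableEq G]
    (R : Finset G)
    (g h : G) (t : ℝ) (k : ℤ) (hk : t = (2 * (k : ℝ) + 1) * (Real.pi / 2))
    (hpst : pst (cayAdj R) g h t) :
    pst (scAdj R R ({1} : Finset G)) (g, 0) (h, 1) t := by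
  subst hk
  rw [scAdj_self_singleton_one]
  exact pst_kronecker_one_add_one_kronecker hpst (pst_adjMatrix_top_fin_two_odd_mul_pi_div_two k)

/-- If `Cay(G,R)` has PST from `g` to `h` at a time `t` which is an odd
multiple of `π/2`, then `SC(G,R,R,{1})` has PST from `(g,0)` to `(h,1)` at time `t`. -/
theorem semiCayley_spoke_pst_of_cayley_pst
    {G : Type*} [CommGroup G] [Fintype G] [DecidableEq G]
    (R : Finset G) (hR : R⁻¹ = R) (h1R : (1 : G) ∉ R)
    (g h : G) (t : ℝ) (ht : 0 < t) (k : ℤ) (hk : t = (2 * (k : ℝ) + 1) * (Real.pi / 2))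
    (hpst : pst (cayAdj R) g h t) :
    pst (scAdj R R ({1} : Finset G)) (g, 0) (h, 1) t :=
  semiCayley_spoke_pst_of_cayley_pst_general R g h t k hk hpst

end
end

section
/- Let G be a finite group having an abelian subgroup H of index 2, write G = H ∪ xH for some x ∉ H, and let T ⊆ G be inverse-closed with 1 ∉ T; write T = T₁ ∪ xT₂ with T₁, T₂ ⊆ H. Let Irr(H) = {χ₁, …, χₙ} where n = |H|. Then the multiset of eigenvalues of the adjacency matrix of Cay(G,T) equals {λᵢ⁺, λᵢ⁻ : i = 1, …, n}, where λᵢ⁺ = (χᵢ(T₁) + χᵢ(xT₁x⁻¹) + √((χᵢ(T₁) − χᵢ(xT₁x⁻¹))² + 4|χᵢ(x²T₂)|²))/2 and λᵢ⁻ = (χᵢ(T₁) + χᵢ(xT₁x⁻¹) − √((χᵢ(T₁) − χᵢ(xT₁x⁻¹))² + 4|χᵢ(x²T₂)|²))/2. -/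
open scoped Classical Pointwise
open Complex Finset Matrix

noncomputable section

/-!
Write `G = H ⊔ xH` and index the vertices by `Fin 2 × H`, `(i, h) ↦ xⁱh`. Since
`(xʲh')(xⁱh)⁻¹ = xʲ(h'h⁻¹)x⁻ⁱ`, the adjacency matrix becomes a `2 × 2` array of `H`-circulant
blocks. The characters of the abelian group `H` diagonalize all circulants at once, so the
character table conjugates the adjacency matrix into one `2 × 2` block per character `χ`,
namely `[[χ(T₁), χ(T₂)], [conj χ(T₂), χ(xT₁x⁻¹)]]`. This block is Hermitian (`T₁` and `xT₁x⁻¹`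
are inverse-closed) and `|χ(T₂)| = |χ(x²T₂)|`, so its eigenvalues are the two roots `λ_χ^±`.
-/

open ComplexConjugate

namespace MonoidHom

variable {K : Type*}

lemma norm_apply_eq_one [Group K] [Finite K] (χ : K →* ℂ) (k : K) : ‖χ k‖ = 1 :=
  Complex.norm_eq_one_of_pow_eq_one (by rw [← map_pow, pow_card_eq_one', map_one])
    Nat.card_pos.ne'

lemma conj_apply [Group K] [Finite K] (χ : K →* ℂ) (k : K) : conj (χ k) = χ k⁻¹ := by
  rw [map_inv, Complex.inv_eq_conj (χ.norm_apply_eq_one k)]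

lemma conj_sum_of_inv_eq [Group K] [Finite K] [DecidableEq K] (χ : K →* ℂ) {S : Finset K}
    (hS : S⁻¹ = S) : conj (∑ k ∈ S, χ k) = ∑ k ∈ S, χ k := by
  simp_rw [map_sum, conj_apply]
  conv_rhs => rw [← hS, Finset.sum_inv_index]

lemma norm_sum_apply_mul [Group K] [Finite K] (χ : K →* ℂ) (g : K) (S : Finset K) :
    ‖∑ a ∈ S, χ (g * a)‖ = ‖∑ a ∈ S, χ a‖ := by
  simp_rw [map_mul, ← Finset.mul_sum, norm_mul, χ.norm_apply_eq_one, one_mul]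

lemma sum_inv_apply_mul_apply [CommGroup K] [Fintype K] (χ ψ : K →* ℂ) :
    ∑ k, (χ k)⁻¹ * ψ k = if χ = ψ then (Fintype.card K : ℂ) else 0 := by
  simp_rw [← map_inv]
  split_ifs with h
  · subst h
    simp only [← map_mul, inv_mul_cancel, map_one, Finset.sum_const, Finset.card_univ,
      nsmul_eq_mul, mul_one]
  · refine sum_hom_units_eq_zero (χ.comp invMonoidHom * ψ) fun h1 => h (ext fun k => ?_)
    have hk : χ k⁻¹ * ψ k = 1 := DFunLike.congr_fun h1 k
    calc χ k = χ k * (χ k⁻¹ * ψ k) := by rw [hk, mul_one]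
      _ = ψ k := by rw [← mul_assoc, ← map_mul, mul_inv_cancel, map_one, one_mul]

end MonoidHom

lemma card_monoidHom_complex (K : Type*) [CommGroup K] [Finite K] :
    Nat.card (K →* ℂ) = Nat.card K := by
  have : NeZero (Monoid.exponent K) := ⟨Monoid.exponent_ne_zero_of_finite⟩
  rw [Nat.card_congr MonoidHom.toHomUnitsMulEquiv.toEquiv,
    CommGroup.card_monoidHom_of_hasEnoughRootsOfUnity]

namespace Matrix

section Charpoly

open Polynomial

variable {R m n : Type*} [CommRing R] [Fintype m] [Fintype n] [DecidableEq m] [DecidableEq n]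

lemma charpoly_eq_of_mul_eq_mul (e : m ≃ n) {P : Matrix m n R} {Q : Matrix n m R}
    (hPQ : P * Q = 1) {A : Matrix n n R} {B : Matrix m m R} (h : P * A = B * P) :
    A.charpoly = B.charpoly := by
  have hQP : Q * P = 1 := (mul_eq_one_comm_of_equiv e).mp hPQ
  have hA : A = A * Q * P := by rw [Matrix.mul_assoc, hQP, Matrix.mul_one]
  have hB : B = P * (A * Q) := by
    rw [← Matrix.mul_assoc, h, Matrix.mul_assoc, hPQ, Matrix.mul_one]
  rw [hB]
  conv_lhs => rw [hA]
  refine (isRegular_X_pow (Fintype.card n)).left.eq_iff.mp ?_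
  rw [charpoly_mul_comm', Fintype.card_congr e]

lemma charpoly_blockDiagonal {o : Type*} [Fintype o] [DecidableEq o] (M : o → Matrix n n R) :
    (blockDiagonal M).charpoly = ∏ k, (M k).charpoly := by
  have : charmatrix (blockDiagonal M) = blockDiagonal fun k => charmatrix (M k) := by
    ext ⟨i, k⟩ ⟨j, l⟩
    by_cases hkl : k = l <;> by_cases hij : i = j <;> simp [blockDiagonal_apply, hkl, hij]
  rw [charpoly, this, det_blockDiagonal]
  rfl

lemma charpoly_fin_two_of_isHermitian (a b : ℝ) (s : ℂ) :
    (!![(a : ℂ), s; conj s, (b : ℂ)]).charpoly =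
      (X - C (((a + b + √((a - b) ^ 2 + 4 * ‖s‖ ^ 2)) / 2 : ℝ) : ℂ)) *
      (X - C (((a + b - √((a - b) ^ 2 + 4 * ‖s‖ ^ 2)) / 2 : ℝ) : ℂ)) := by
  set d := √((a - b) ^ 2 + 4 * ‖s‖ ^ 2)
  have hd : (d : ℂ) ^ 2 = (a - b) ^ 2 + 4 * (‖s‖ : ℂ) ^ 2 := by
    exact_mod_cast Real.sq_sqrt (by positivity)
  have hs : s * conj s = (‖s‖ : ℂ) ^ 2 := Complex.mul_conj' s
  have hroots (p q : ℂ) : (X - C p) * (X - C q) = X ^ 2 - C (p + q) * X + C (p * q) := by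
    simp only [map_add, map_mul]
    ring
  have hsum : (a + b : ℂ) = ((a + b + d) / 2 : ℝ) + ((a + b - d) / 2 : ℝ) := by
    push_cast
    ring
  have hprod : a * b - s * conj s = ((a + b + d) / 2 : ℝ) * ((a + b - d) / 2 : ℝ) := by
    push_cast
    linear_combination (1 / 4 : ℂ) * hd - hs
  rw [charpoly_fin_two, trace_fin_two_of, det_fin_two_of, hroots, hsum, hprod]

end Charpoly

section BlockCirculant

variable {ι K α : Type*}

def blockCirculant [Group K] (f : ι → ι → K → α) : Matrix (ι × K) (ι × K) α :=
  of fun p q => f p.1 q.1 (q.2 * p.2⁻¹)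

def blockCirculantSymbol [Group K] [Fintype K] (f : ι → ι → K → ℂ) (χ : K →* ℂ) :
    Matrix ι ι ℂ :=
  of fun i j => ∑ k, f i j k * χ k

theorem charpoly_blockCirculant [CommGroup K] [Fintype K] [DecidableEq K] [Fintype (K →* ℂ)]
    [Fintype ι] [DecidableEq ι] (f : ι → ι → K → ℂ) :
    (blockCirculant f).charpoly = ∏ χ : K →* ℂ, (blockCirculantSymbol f χ).charpoly := by
  -- `U` is the character table of `K` repeated along `ι`; `U * V = 1` is the orthogonality
  -- of characters.
  let U : Matrix (ι × (K →* ℂ)) (ι × K) ℂ := of fun p q => if p.1 = q.1 then p.2 q.2⁻¹ else 0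
  let V : Matrix (ι × K) (ι × (K →* ℂ)) ℂ :=
    of fun p q => if p.1 = q.1 then q.2 p.2 / Fintype.card K else 0
  have hUV : U * V = 1 := by
    ext ⟨i, χ⟩ ⟨j, ψ⟩
    simp only [U, V, mul_apply, of_apply, one_apply, map_inv, mul_ite, ite_mul, zero_mul,
      mul_zero, Fintype.sum_prod_type, sum_ite_irrel, sum_const_zero, sum_ite_eq', mem_univ,
      ↓reduceIte, Prod.mk.injEq]
    simp_rw [mul_div_assoc', ← Finset.sum_div, MonoidHom.sum_inv_apply_mul_apply]
    by_cases hij : i = j <;> by_cases hχψ : χ = ψ <;> simp [hij, hχψ]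
  have hUB : U * blockCirculant f = blockDiagonal (blockCirculantSymbol f) * U := by
    ext ⟨i, χ⟩ ⟨j, h₀⟩
    simp only [U, blockCirculant, blockCirculantSymbol, blockDiagonal_apply, mul_apply, of_apply,
      map_inv, mul_ite, ite_mul, zero_mul, mul_zero, Fintype.sum_prod_type, sum_ite_irrel,
      sum_const_zero, sum_ite_eq, sum_ite_eq', mem_univ, ↓reduceIte]
    rw [Finset.sum_mul, ← (Equiv.divLeft h₀).sum_comp]
    refine Finset.sum_congr rfl fun k _ => ?_
    simp only [Equiv.divLeft, Equiv.coe_fn_mk, map_div, inv_div, mul_div_cancel]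
    ring
  have hcard : Fintype.card (K →* ℂ) = Fintype.card K := by
    simpa only [Nat.card_eq_fintype_card] using card_monoidHom_complex K
  rw [charpoly_eq_of_mul_eq_mul ((Equiv.refl ι).prodCongr (Fintype.equivOfCardEq hcard)) hUV hUB,
    charpoly_blockDiagonal]

end BlockCirculant

end Matrix

namespace Subgroup

variable {G : Type*} [Group G] {H : Subgroup G} {x : G}

lemma bijective_pow_mul_of_index_eq_two (hH : H.index = 2) (hx : x ∉ H) :
    Function.Bijective fun p : Fin 2 × H => x ^ (p.1 : ℕ) * p.2 := by
  refine ⟨?_, fun g => ?_⟩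
  · rintro ⟨i, a⟩ ⟨j, b⟩ h
    fin_cases i <;> fin_cases j <;>
      simp only [Fin.zero_eta, Fin.mk_one, Fin.isValue, pow_zero, pow_one, one_mul, mul_right_inj,
        SetLike.coe_eq_coe, Prod.mk.injEq, true_and, zero_ne_one, one_ne_zero, false_and] at h ⊢
    · exact h
    · exact hx (by simpa [h] using H.mul_mem a.2 (H.inv_mem b.2))
    · exact hx (by simpa [← h] using H.mul_mem b.2 (H.inv_mem a.2))
    · exact h
  · by_cases hg : g ∈ H
    · exact ⟨(0, ⟨g, hg⟩), by simp⟩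
    · have hxg : x⁻¹ * g ∈ H := (mul_mem_iff_of_index_two hH).mpr
        (iff_of_false (fun h => hx (by simpa using H.inv_mem h)) hg)
      exact ⟨(1, ⟨x⁻¹ * g, hxg⟩), by simp⟩

variable [DecidableEq G] (T₁ T₂ : Finset H)

lemma coe_mem_union_image_iff (hx : x ∉ H) (k : H) :
    (k : G) ∈ T₁.image (↑) ∪ T₂.image (x * ↑·) ↔ k ∈ T₁ := by
  simp only [Finset.mem_union, Finset.mem_image, Subtype.exists, exists_and_right,
    exists_eq_right, SetLike.coe_eq_coe, or_iff_left_iff_imp, forall_exists_index, and_imp]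
  intro a ha _ hk
  exact absurd ((H.mul_mem_cancel_right ha).mp (hk ▸ k.2)) hx

lemma mul_coe_mem_union_image_iff (hx : x ∉ H) (k : H) :
    x * k ∈ T₁.image (↑) ∪ T₂.image (x * ↑·) ↔ k ∈ T₂ := by
  simp only [Finset.mem_union, Finset.mem_image, Subtype.exists, exists_and_right,
    exists_eq_right, mul_right_inj, SetLike.coe_eq_coe, or_iff_right_iff_imp]
  rintro ⟨hxk, -⟩
  exact absurd ((H.mul_mem_cancel_right k.2).mp hxk) hx

end Subgroup

open Matrix

lemma cayAdj_submatrix_eq_blockCirculant {G ι : Type*} [Group G] [DecidableEq G] (T : Finset G)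
    (H : Subgroup G) (r : ι → G) :
    (cayAdj T).submatrix (fun p : ι × H => r p.1 * p.2) (fun p : ι × H => r p.1 * p.2) =
      blockCirculant fun i j (k : H) => if r j * k * (r i)⁻¹ ∈ T then 1 else 0 := by
  ext ⟨i, a⟩ ⟨j, b⟩
  simp [cayAdj, blockCirculant, mul_assoc]

lemma blockCirculantSymbol_cayley {G : Type*} [Group G] [DecidableEq G] {H : Subgroup G}
    [Fintype H] {x : G} {T : Finset G} {T₁ T₂ : Finset H} {c : H → H}
    (hT₁ : ∀ k : H, (k : G) ∈ T ↔ k ∈ T₁) (hT₂ : ∀ k : H, x * k ∈ T ↔ k ∈ T₂) (hT : T⁻¹ = T)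
    (hc : ∀ a : H, (c a : G) = x * a * x⁻¹) (hcc : Function.Involutive c) (χ : H →* ℂ) :
    blockCirculantSymbol (fun (i j : Fin 2) (k : H) =>
        if x ^ (j : ℕ) * k * (x ^ (i : ℕ))⁻¹ ∈ T then 1 else 0) χ =
      !![∑ a ∈ T₁, χ a, ∑ a ∈ T₂, χ a; conj (∑ a ∈ T₂, χ a), ∑ a ∈ T₁, χ (c a)] := by
  have sum_ite_of_iff {P : H → Prop} [DecidablePred P] {S : Finset H} (hP : ∀ k, P k ↔ k ∈ S)
      (g : H → ℂ) : ∑ k, (if P k then g k else 0) = ∑ k ∈ S, g k := by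
    simp [hP]
  ext i j
  fin_cases i <;> fin_cases j <;>
    simp only [blockCirculantSymbol, of_apply, ite_mul, one_mul, zero_mul, Fin.zero_eta, Fin.mk_one,
      Fin.isValue, Fin.val_zero, Fin.val_one, pow_zero, pow_one, inv_one, mul_one, map_sum,
      cons_val', cons_val_zero, cons_val_one, cons_val_fin_one]
  · exact sum_ite_of_iff hT₁ χ
  · exact sum_ite_of_iff hT₂ χ
  · rw [sum_ite_of_iff (S := T₂⁻¹) (fun k => ?_), Finset.sum_inv_index]
    · simp_rw [χ.conj_apply]
    rw [Finset.mem_inv', ← hT₂]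
    conv_lhs => rw [← hT, Finset.mem_inv']
    simp
  · calc ∑ k : H, (if x * k * x⁻¹ ∈ T then χ k else 0)
        = ∑ a, (if x * c a * x⁻¹ ∈ T then χ (c a) else 0) :=
          (Equiv.sum_comp (hcc.toPerm c) fun k => if x * k * x⁻¹ ∈ T then χ k else 0).symm
      _ = ∑ a ∈ T₁, χ (c a) := sum_ite_of_iff (fun a => by rw [← hc, hcc, hT₁]) _

theorem cayley_index_two_eigenvalues_general
    {G : Type*} [Group G] [Fintype G] [DecidableEq G]
    (H : Subgroup G) (hidx : H.index = 2)
    (hab : ∀ a ∈ H, ∀ b ∈ H, a * b = b * a)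
    (x : G) (hx : x ∉ H) (hx2 : x * x ∈ H)
    (T₁ T₂ : Finset ↥H)
    (c : ↥H → ↥H) (hc : ∀ a : ↥H, ((c a : G)) = x * (a : G) * x⁻¹)
    (T : Finset G)
    (hT : T = T₁.image (fun a : ↥H => (a : G)) ∪ T₂.image (fun a : ↥H => x * (a : G)))
    (hTinv : T⁻¹ = T)
    [Fintype (↥H →* ℂ)] :
    (cayAdj T).charpoly =
      ∏ χ : ↥H →* ℂ,
        ((Polynomial.X - Polynomial.C (((((∑ a ∈ T₁, χ a).re + (∑ a ∈ T₁, χ (c a)).re +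
              Real.sqrt (((∑ a ∈ T₁, χ a).re - (∑ a ∈ T₁, χ (c a)).re) ^ 2 +
                4 * ‖∑ a ∈ T₂, χ ((⟨x * x, hx2⟩ : ↥H) * a)‖ ^ 2)) / 2 : ℝ) : ℂ))) *
         (Polynomial.X - Polynomial.C (((((∑ a ∈ T₁, χ a).re + (∑ a ∈ T₁, χ (c a)).re -
              Real.sqrt (((∑ a ∈ T₁, χ a).re - (∑ a ∈ T₁, χ (c a)).re) ^ 2 +
                4 * ‖∑ a ∈ T₂, χ ((⟨x * x, hx2⟩ : ↥H) * a)‖ ^ 2)) / 2 : ℝ) : ℂ)))) := by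
  have : IsMulCommutative H := .of_setLike_mul_comm hab
  have hT₁ : ∀ k : H, (k : G) ∈ T ↔ k ∈ T₁ := hT ▸ H.coe_mem_union_image_iff T₁ T₂ hx
  have hT₂ : ∀ k : H, x * k ∈ T ↔ k ∈ T₂ := hT ▸ H.mul_coe_mem_union_image_iff T₁ T₂ hx
  have hT₁inv : T₁⁻¹ = T₁ := by
    ext k
    rw [Finset.mem_inv', ← hT₁, ← hT₁, H.coe_inv, ← Finset.mem_inv', hTinv]
  have hcc : Function.Involutive c := fun a => Subtype.ext <| by
    rw [hc, hc, ← mul_assoc, ← mul_assoc, hab _ hx2 _ a.2]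
    group
  let cHom : H →* H := MonoidHom.mk' c fun a b => Subtype.ext <| by
    simp only [H.coe_mul, hc]
    group
  have hbij := H.bijective_pow_mul_of_index_eq_two hidx hx
  rw [← charpoly_reindex (Equiv.ofBijective _ hbij).symm, reindex_apply, Equiv.symm_symm,
    Equiv.coe_ofBijective, cayAdj_submatrix_eq_blockCirculant T H fun i : Fin 2 => x ^ (i : ℕ)]
  open scoped IsMulCommutative in rw [charpoly_blockCirculant]
  refine Finset.prod_congr rfl fun χ _ => ?_
  have hre₁ : ((∑ a ∈ T₁, χ a).re : ℂ) = ∑ a ∈ T₁, χ a :=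
    Complex.conj_eq_iff_re.mp (χ.conj_sum_of_inv_eq hT₁inv)
  have hre₂ : ((∑ a ∈ T₁, χ (c a)).re : ℂ) = ∑ a ∈ T₁, χ (c a) :=
    Complex.conj_eq_iff_re.mp ((χ.comp cHom).conj_sum_of_inv_eq hT₁inv)
  rw [blockCirculantSymbol_cayley hT₁ hT₂ hTinv hc hcc χ]
  conv_lhs => rw [← hre₁, ← hre₂]
  rw [charpoly_fin_two_of_isHermitian, χ.norm_sum_apply_mul]

/-- Eigenvalues of a Cayley graph over a group with an abelian subgroup `H`
of index `2`, expressed via the characteristic polynomial. -/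
theorem cayley_index_two_eigenvalues
    {G : Type*} [Group G] [Fintype G] [DecidableEq G]
    (H : Subgroup G) (hidx : H.index = 2)
    (hab : ∀ a ∈ H, ∀ b ∈ H, a * b = b * a)
    (x : G) (hx : x ∉ H) (hx2 : x * x ∈ H)
    (T₁ T₂ : Finset ↥H)
    (c : ↥H → ↥H) (hc : ∀ a : ↥H, ((c a : G)) = x * (a : G) * x⁻¹)
    (T : Finset G)
    (hT : T = T₁.image (fun a : ↥H => (a : G)) ∪ T₂.image (fun a : ↥H => x * (a : G)))
    (hTinv : T⁻¹ = T) (h1T : (1 : G) ∉ T)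
    [Fintype (↥H →* ℂ)] :
    (cayAdj T).charpoly =
      ∏ χ : ↥H →* ℂ,
        ((Polynomial.X - Polynomial.C (((((∑ a ∈ T₁, χ a).re + (∑ a ∈ T₁, χ (c a)).re +
              Real.sqrt (((∑ a ∈ T₁, χ a).re - (∑ a ∈ T₁, χ (c a)).re) ^ 2 +
                4 * ‖∑ a ∈ T₂, χ ((⟨x * x, hx2⟩ : ↥H) * a)‖ ^ 2)) / 2 : ℝ) : ℂ))) *
         (Polynomial.X - Polynomial.C (((((∑ a ∈ T₁, χ a).re + (∑ a ∈ T₁, χ (c a)).re -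
              Real.sqrt (((∑ a ∈ T₁, χ a).re - (∑ a ∈ T₁, χ (c a)).re) ^ 2 +
                4 * ‖∑ a ∈ T₂, χ ((⟨x * x, hx2⟩ : ↥H) * a)‖ ^ 2)) / 2 : ℝ) : ℂ)))) :=
  cayley_index_two_eigenvalues_general H hidx hab x hx hx2 T₁ T₂ c hc T hT hTinv

end
end

section
/- Let G be a finite abelian group, R, L, S ⊆ G with R = R⁻¹, L = L⁻¹, 1 ∉ R ∪ L, and let Γ = SC(G,R,L,S). If Γ has perfect state transfer between two distinct vertices (g,r) and (h,r) (same second coordinate), then a = g⁻¹h has order 2 in G. In particular, if G has odd order then Γ has no perfect state transfer between any two distinct vertices of the form (g,r) and (h,r). -/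
open scoped Classical Pointwise
open Complex Finset Matrix

noncomputable section

/-!
`H(t)` is unitary, so no row of it has two entries of modulus one, and it is symmetric because
the adjacency matrix is. Right translations of `G` are automorphisms of `SC(G,R,L,S)`, hence
commute with `H(t)`. Translating PST from `(g,r)` to `(h,r)` by `g⁻¹h` yields PST from `(h,r)`
to `(hg⁻¹h,r)`, while symmetry yields PST from `(h,r)` to `(g,r)`. So `hg⁻¹h = g`, that is,
`(g⁻¹h)² = 1`.
-/

namespace Matrix

variable {n 𝕜 α : Type*} [Fintype n] [DecidableEq n]

theorem sum_norm_sq_apply_of_mem_unitaryGroup [RCLike 𝕜] {U : Matrix n n 𝕜}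
    (hU : U ∈ unitaryGroup n 𝕜) (i : n) : ∑ j, ‖U i j‖ ^ 2 = 1 := by
  have hii := congrFun (congrFun (mem_unitaryGroup_iff.mp hU) i) i
  simp only [mul_apply, star_apply, RCLike.star_def, RCLike.mul_conj, one_apply_eq] at hii
  exact_mod_cast hii

theorem eq_of_norm_apply_eq_one_of_mem_unitaryGroup [RCLike 𝕜] {U : Matrix n n 𝕜}
    (hU : U ∈ unitaryGroup n 𝕜) {i j k : n} (hj : ‖U i j‖ = 1) (hk : ‖U i k‖ = 1) :
    j = k := by
  by_contra hjk
  have hle : ‖U i j‖ ^ 2 + ‖U i k‖ ^ 2 ≤ ∑ l, ‖U i l‖ ^ 2 := by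
    rw [← Finset.sum_pair (f := fun l => ‖U i l‖ ^ 2) hjk]
    exact Finset.sum_le_univ_sum_of_nonneg fun _ => sq_nonneg _
  rw [hj, hk, sum_norm_sq_apply_of_mem_unitaryGroup hU] at hle
  norm_num at hle

theorem commute_toMatrix_toPEquiv_iff [CommRing α] (e : n ≃ n) (M : Matrix n n α) :
    Commute (e.toPEquiv.toMatrix : Matrix n n α) M ↔ ∀ i j, M (e i) (e j) = M i j := by
  rw [Commute, SemiconjBy, PEquiv.toMatrix_toPEquiv_mul, PEquiv.mul_toMatrix_toPEquiv]
  refine ⟨fun h i j => ?_, fun h => ?_⟩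
  · simpa using congrFun (congrFun h i) (e j)
  · ext i j
    simpa using h i (e.symm j)

end Matrix

section Transfer

variable {V : Type*} [Fintype V] [DecidableEq V] {A : Matrix V V ℂ}

theorem transfer_mem_unitaryGroup (hA : A.IsHermitian) (t : ℝ) :
    transfer A t ∈ unitaryGroup V ℂ := by
  have hskew : ((-(I * t)) • A)ᴴ = -((-(I * t)) • A) := by
    rw [conjTranspose_smul, hA.eq, ← neg_smul]
    congr 1
    simp
  rw [mem_unitaryGroup_iff, transfer, star_eq_conjTranspose, ← exp_conjTranspose, hskew,
    ← exp_add_of_commute _ _ (Commute.refl ((-(I * t)) • A)).neg_right, add_neg_cancel,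
    NormedSpace.exp_zero]

theorem transfer_apply_comm (hA : Aᵀ = A) (t : ℝ) (u v : V) :
    transfer A t u v = transfer A t v u := by
  rw [← transpose_apply (transfer A t), transfer, ← exp_transpose, transpose_smul, hA]

theorem transfer_apply_equiv {e : V ≃ V} (he : ∀ u v, A (e u) (e v) = A u v) (t : ℝ)
    (u v : V) : transfer A t (e u) (e v) = transfer A t u v :=
  (commute_toMatrix_toPEquiv_iff e _).mp
    (((commute_toMatrix_toPEquiv_iff e A).mpr he).smul_right _).exp_right u v

theorem pst_symm (hA : Aᵀ = A) {u v : V} {t : ℝ} (h : pst A u v t) : pst A v u t := by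
  rwa [pst, transfer_apply_comm hA]

theorem pst_equiv_iff {e : V ≃ V} (he : ∀ u v, A (e u) (e v) = A u v) {u v : V} {t : ℝ} :
    pst A (e u) (e v) t ↔ pst A u v t := by
  rw [pst, pst, transfer_apply_equiv he]

theorem eq_of_pst_of_pst (hA : A.IsHermitian) {u v w : V} {t : ℝ} (hv : pst A u v t)
    (hw : pst A u w t) : v = w :=
  eq_of_norm_apply_eq_one_of_mem_unitaryGroup (transfer_mem_unitaryGroup hA t) hv hw

end Transfer

section SemiCayley

variable {G : Type*} [Group G] {R L S : Finset G}

theorem scAdj_mul_right (c x y : G) (i j : Fin 2) :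
    scAdj R L S (x * c, i) (y * c, j) = scAdj R L S (x, i) (y, j) := by
  have hmul (z w : G) : z * c * (w * c)⁻¹ = z * w⁻¹ := by group
  simp only [scAdj, hmul]

variable [DecidableEq G]

theorem scAdj_transpose (hR : R⁻¹ = R) (hL : L⁻¹ = L) : (scAdj R L S)ᵀ = scAdj R L S := by
  have mem_iff {X : Finset G} (hX : X⁻¹ = X) (x y : G) : y * x⁻¹ ∈ X ↔ x * y⁻¹ ∈ X := by
    conv_lhs => rw [← hX]
    rw [Finset.mem_inv', _root_.mul_inv_rev, inv_inv]
  ext ⟨x, i⟩ ⟨y, j⟩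
  fin_cases i <;> fin_cases j <;> simp [scAdj, mem_iff hR, mem_iff hL]

theorem scAdj_isHermitian (hR : R⁻¹ = R) (hL : L⁻¹ = L) : (scAdj R L S).IsHermitian := by
  have hreal : (scAdj R L S).map star = scAdj R L S := by
    ext u v
    simp only [map_apply, scAdj]
    split_ifs <;> simp
  rw [IsHermitian, conjTranspose, scAdj_transpose hR hL, hreal]

theorem sq_inv_mul_eq_one_of_pst_scAdj [Fintype G] (hR : R⁻¹ = R) (hL : L⁻¹ = L) {g h : G}
    {r : Fin 2} {t : ℝ} (hpst : pst (scAdj R L S) (g, r) (h, r) t) : (g⁻¹ * h) ^ 2 = 1 := by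
  set e : G × Fin 2 ≃ G × Fin 2 := (Equiv.mulRight (g⁻¹ * h)).prodCongr (Equiv.refl _)
  have he : ∀ u v, scAdj R L S (e u) (e v) = scAdj R L S u v :=
    fun u v => scAdj_mul_right _ u.1 v.1 u.2 v.2
  have hfwd : pst (scAdj R L S) (h, r) (h * (g⁻¹ * h), r) t := by
    simpa [e] using (pst_equiv_iff he).mpr hpst
  have hback : pst (scAdj R L S) (h, r) (g, r) t := pst_symm (scAdj_transpose hR hL) hpst
  have hhgh : h * (g⁻¹ * h) = g :=
    (Prod.ext_iff.mp (eq_of_pst_of_pst (scAdj_isHermitian hR hL) hfwd hback)).1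
  rw [sq, mul_assoc, hhgh, inv_mul_cancel]

end SemiCayley

theorem semiCayley_pst_same_side_order_two_general
    {G : Type*} [CommGroup G] [Fintype G] [DecidableEq G]
    (R L S : Finset G) (hR : R⁻¹ = R) (hL : L⁻¹ = L) :
    (∀ (g h : G) (r : Fin 2) (t : ℝ), 0 < t → ((g, r) : G × Fin 2) ≠ (h, r) →
      pst (scAdj R L S) (g, r) (h, r) t → orderOf (g⁻¹ * h) = 2) ∧
    (Odd (Fintype.card G) →
      ∀ (g h : G) (r : Fin 2) (t : ℝ), 0 < t → ((g, r) : G × Fin 2) ≠ (h, r) →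
        ¬ pst (scAdj R L S) (g, r) (h, r) t) := by
  have order_two : ∀ (g h : G) (r : Fin 2) (t : ℝ), 0 < t → ((g, r) : G × Fin 2) ≠ (h, r) →
      pst (scAdj R L S) (g, r) (h, r) t → orderOf (g⁻¹ * h) = 2 := by
    intro g h r t _ hne hpst
    have hgh : g⁻¹ * h ≠ 1 := fun h1 => hne (by rw [inv_mul_eq_one.mp h1])
    exact orderOf_eq_prime (sq_inv_mul_eq_one_of_pst_scAdj hR hL hpst) hgh
  refine ⟨order_two, fun hodd g h r t ht hne hpst => ?_⟩
  have heven : Even (Fintype.card G) :=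
    even_iff_two_dvd.mpr (order_two g h r t ht hne hpst ▸ orderOf_dvd_card)
  exact Nat.not_odd_iff_even.mpr heven hodd

/-- If `SC(G,R,L,S)` has PST between two distinct vertices with the same
second coordinate, then `g⁻¹h` has order `2`; in particular this is impossible when `G` has
odd order. -/
theorem semiCayley_pst_same_side_order_two
    {G : Type*} [CommGroup G] [Fintype G] [DecidableEq G]
    (R L S : Finset G) (hR : R⁻¹ = R) (hL : L⁻¹ = L)
    (h1R : (1 : G) ∉ R) (h1L : (1 : G) ∉ L) :
    (∀ (g h : G) (r : Fin 2) (t : ℝ), 0 < t → ((g, r) : G × Fin 2) ≠ (h, r) →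
      pst (scAdj R L S) (g, r) (h, r) t → orderOf (g⁻¹ * h) = 2) ∧
    (Odd (Fintype.card G) →
      ∀ (g h : G) (r : Fin 2) (t : ℝ), 0 < t → ((g, r) : G × Fin 2) ≠ (h, r) →
        ¬ pst (scAdj R L S) (g, r) (h, r) t) :=
  semiCayley_pst_same_side_order_two_general R L S hR hL

end
end
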